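/- Let M be a positive integer and f : ℤ → ℂ an M-periodic function. (i) If f is even (f(-n) = f(n) for all n), then L(0, f) = -f(0)/2 and L(-ν, f) = 0 for every even integer ν ≥ 2. (ii) If f is odd (f(-n) = -f(n) for all n), then L(-ν, f) = 0 for every odd integer ν ≥ 1. -/

import Mathlib

/-!
The reflection `ℓ ↦ M - ℓ` maps `{0, …, M}` to itself and sends `ℓ / M` to `1 - ℓ / M`.
Since `B_k(1 - x) = (-1)^k B_k(x)`, if `f(-n) = ε f(n)` with `ε (-1)^k = -1` then
`Σ_{ℓ=0}^{M} f(ℓ) B_k(ℓ/M)` equals its own negative, so it vanishes and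
`Σ_{ℓ=1}^{M} f(ℓ) B_k(ℓ/M) = -f(0) B_k`. For `k = ν + 1` this leaves `L(-ν, f)` proportional to
`f(0) B_{ν+1}`, which is `f(0)/2` for even `f` and `ν = 0`, vanishes for even `f` since odd
Bernoulli numbers past `B_1` vanish, and vanishes for odd `f` since `f(0) = 0`.
-/

open Complex

/-- `L(-m, g)` for a `P`-periodic `g`, via Bernoulli polynomials:
`L(-m, g) = -(P^m/(m+1)) Σ_{ℓ=1}^P g(ℓ) B_{m+1}(ℓ/P)`. -/
noncomputable def Lval (P : ℕ) (g : ℤ → ℂ) (m : ℕ) : ℂ :=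
  -((P : ℂ) ^ m / (m + 1)) * ∑ ℓ ∈ Finset.Icc 1 P,
    g ℓ * (((Polynomial.bernoulli (m + 1)).eval ((ℓ : ℚ) / P) : ℚ) : ℂ)

open Finset

section

variable {K : Type*} [Field K] [CharZero K] {M : ℕ} {f : ℤ → K} {ε : K}

theorem sum_range_bernoulli_eval_div_eq_zero (hM : 0 < M) (hf : Function.Periodic f M)
    (hsym : ∀ n : ℤ, f (-n) = ε * f n) {k : ℕ} (hk : ε * (-1) ^ k = -1) :
    ∑ ℓ ∈ range (M + 1), f ℓ * (((Polynomial.bernoulli k).eval ((ℓ : ℚ) / M) : ℚ) : K) = 0 := by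
  set g : ℕ → K := fun ℓ ↦ f ℓ * (((Polynomial.bernoulli k).eval ((ℓ : ℚ) / M) : ℚ) : K)
  have hreflect : ∑ ℓ ∈ range (M + 1), g ℓ = ε * (-1) ^ k * ∑ ℓ ∈ range (M + 1), g ℓ := by
    conv_lhs => rw [← sum_range_reflect]
    rw [mul_sum]
    refine sum_congr rfl fun j hj ↦ ?_
    have hjM : j ≤ M := Nat.lt_succ_iff.mp (mem_range.mp hj)
    have hfj : f ((M + 1 - 1 - j : ℕ) : ℤ) = ε * f j := by
      rw [Nat.add_sub_cancel, Nat.cast_sub hjM, sub_eq_neg_add, hf, hsym]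
    have hdiv : ((M + 1 - 1 - j : ℕ) : ℚ) / M = 1 - (j : ℚ) / M := by
      rw [Nat.add_sub_cancel, Nat.cast_sub hjM, sub_div, div_self (by positivity)]
    simp only [g]
    rw [hfj, hdiv, Polynomial.bernoulli_eval_one_sub]
    push_cast
    ring
  rw [hk, neg_one_mul] at hreflect
  exact self_eq_neg.mp hreflect

theorem sum_Icc_bernoulli_eval_div (hM : 0 < M) (hf : Function.Periodic f M)
    (hsym : ∀ n : ℤ, f (-n) = ε * f n) {k : ℕ} (hk : ε * (-1) ^ k = -1) :
    ∑ ℓ ∈ Icc 1 M, f ℓ * (((Polynomial.bernoulli k).eval ((ℓ : ℚ) / M) : ℚ) : K) =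
      -(f 0 * (bernoulli k : K)) := by
  have h := sum_range_bernoulli_eval_div_eq_zero hM hf hsym hk
  rw [Nat.range_succ_eq_Icc_zero, ← sum_Ioc_add_eq_sum_Icc (Nat.zero_le M),
    ← Icc_add_one_left_eq_Ioc] at h
  simpa [eq_neg_iff_add_eq_zero] using h

end

theorem Lval_eq_mul_bernoulli {M : ℕ} (hM : 0 < M) {f : ℤ → ℂ} (hf : Function.Periodic f M)
    {ε : ℂ} (hsym : ∀ n : ℤ, f (-n) = ε * f n) {m : ℕ} (hm : ε * (-1) ^ (m + 1) = -1) :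
    Lval M f m = (M : ℂ) ^ m / (m + 1) * (f 0 * (bernoulli (m + 1) : ℂ)) := by
  rw [Lval, sum_Icc_bernoulli_eval_div hM hf hsym hm]
  ring

theorem statement8 (M : ℕ) (hM : 0 < M) (f : ℤ → ℂ)
    (hf : ∀ n : ℤ, f (n + M) = f n) :
    ((∀ n : ℤ, f (-n) = f n) →
      Lval M f 0 = -f 0 / 2 ∧ ∀ ν : ℕ, 2 ≤ ν → Even ν → Lval M f ν = 0) ∧
    ((∀ n : ℤ, f (-n) = -f n) →
      ∀ ν : ℕ, 1 ≤ ν → Odd ν → Lval M f ν = 0) := by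
  refine ⟨fun heven ↦ ?_, fun hodd ν _ hν ↦ ?_⟩
  · have hsym : ∀ n : ℤ, f (-n) = 1 * f n := by simpa using heven
    refine ⟨?_, fun ν hν2 hν ↦ ?_⟩
    · rw [Lval_eq_mul_bernoulli hM hf hsym (by norm_num), zero_add, bernoulli_one]
      push_cast
      ring
    · rw [Lval_eq_mul_bernoulli hM hf hsym (m := ν) (by simp [hν.add_one.neg_one_pow]),
        bernoulli_eq_zero_of_odd hν.add_one (by omega)]
      simp
  · have hf0 : f 0 = 0 := self_eq_neg.mp (by simpa using hodd 0)
    rw [Lval_eq_mul_bernoulli hM hf (ε := -1) (m := ν) (by simpa using hodd)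
      (by simp [hν.add_one.neg_one_pow]), hf0]
    simp
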